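/- Suppose q : ℝ≥0 → ℝ is differentiable and satisfies q'_t = λ - θ·(q_t - 1)⁺ - μ·(q_t ⊓ 1) with q_0 ≥ 0, where 0 < λ < μ and θ > 0 are constants. Then q_t converges to λ/μ as t → ∞. -/

import Mathlib

open Filter Topology Real

/-!
The squared distance `(x - λ/μ)²` is a strict Lyapunov function: below `1` the drift is
`-μ (x - λ/μ)`, above `1` it is `-μ (1 - λ/μ) - θ (x - 1)`, so in both cases it points towards
`λ/μ` with rate at least `min μ θ`. Grönwall's inequality then gives
`(q t - λ/μ)² ≤ (q 0 - λ/μ)² e^{-2 min μ θ t}`.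
-/

def fluidDrift (lam μ θ x : ℝ) : ℝ :=
  lam - θ * max (x - 1) 0 - μ * min x 1

theorem sub_mul_fluidDrift_le {lam μ θ : ℝ} (hμ : 0 < μ) (hlamμ : lam ≤ μ) (x : ℝ) :
    (x - lam / μ) * fluidDrift lam μ θ x ≤ -min μ θ * (x - lam / μ) ^ 2 := by
  have ha1 : lam / μ ≤ 1 := (div_le_one hμ).mpr hlamμ
  have hcμ : 0 ≤ μ - min μ θ := sub_nonneg.mpr (min_le_left μ θ)
  have hcθ : 0 ≤ θ - min μ θ := sub_nonneg.mpr (min_le_right μ θ)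
  unfold fluidDrift
  nth_rewrite 2 [← mul_div_cancel₀ lam hμ.ne']
  set a := lam / μ
  rcases le_or_gt x 1 with hx | hx
  · rw [max_eq_right (by linarith), min_eq_left hx]
    nlinarith [mul_nonneg hcμ (sq_nonneg (x - a))]
  · rw [max_eq_left (by linarith), min_eq_right hx.le]
    have hxa : 0 ≤ x - a := by linarith
    nlinarith [mul_nonneg (mul_nonneg hxa hcμ) (sub_nonneg.mpr ha1),
      mul_nonneg (mul_nonneg hxa hcθ) (sub_nonneg.mpr hx.le)]

section Lyapunov

variable {q F : ℝ → ℝ} {a c : ℝ}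

theorem sq_sub_le_exp_of_hasDerivAt
    (hq : ∀ t, 0 ≤ t → HasDerivAt q (F t) t)
    (hF : ∀ t, 0 ≤ t → (q t - a) * F t ≤ -c * (q t - a) ^ 2) {t : ℝ} (ht : 0 ≤ t) :
    (q t - a) ^ 2 ≤ (q 0 - a) ^ 2 * exp (-(2 * c) * t) := by
  have hV : ∀ s, 0 ≤ s → HasDerivAt (fun s => (q s - a) ^ 2) (2 * (q s - a) * F s) s := by
    intro s hs
    simpa using ((hq s hs).sub_const a).fun_pow 2
  have := le_gronwallBound_of_liminf_deriv_right_le (f := fun s => (q s - a) ^ 2)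
    (K := -(2 * c)) (ε := 0) (a := 0) (b := t)
    (fun s hs => (hV s hs.1).continuousAt.continuousWithinAt)
    (fun s hs _ hr => (hV s hs.1).hasDerivWithinAt.liminf_right_slope_le hr) le_rfl
    (fun s hs => by nlinarith [hF s hs.1]) t ⟨ht, le_rfl⟩
  simpa [gronwallBound_ε0] using this

theorem tendsto_of_hasDerivAt_of_sub_mul_le (hc : 0 < c)
    (hq : ∀ t, 0 ≤ t → HasDerivAt q (F t) t)
    (hF : ∀ t, 0 ≤ t → (q t - a) * F t ≤ -c * (q t - a) ^ 2) :
    Tendsto q atTop (𝓝 a) := by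
  have hbound : ∀ t, 0 ≤ t → |q t - a| ≤ |q 0 - a| * exp (-c * t) := by
    intro t ht
    refine abs_le_of_sq_le_sq ?_ (by positivity)
    calc (q t - a) ^ 2 ≤ (q 0 - a) ^ 2 * exp (-(2 * c) * t) :=
        sq_sub_le_exp_of_hasDerivAt hq hF ht
      _ = (|q 0 - a| * exp (-c * t)) ^ 2 := by rw [mul_pow, sq_abs, ← exp_nat_mul]; ring_nf
  have hdecay : Tendsto (fun t => |q 0 - a| * exp (-c * t)) atTop (𝓝 0) := by
    simpa using (tendsto_exp_atBot.comp
      (tendsto_id.const_mul_atTop_of_neg (neg_neg_of_pos hc))).const_mul |q 0 - a|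
  rw [tendsto_iff_norm_sub_tendsto_zero]
  exact squeeze_zero' (.of_forall fun t => norm_nonneg _)
    ((eventually_ge_atTop 0).mono hbound) hdecay

end Lyapunov

theorem stmt_3_general (lam μ θ : ℝ) (hlam : 0 < lam) (hlamμ : lam < μ) (hθ : 0 < θ)
    (q : ℝ → ℝ)
    (hq : ∀ t : ℝ, 0 ≤ t →
      HasDerivAt q (lam - θ * max (q t - 1) 0 - μ * min (q t) 1) t) :
    Tendsto q atTop (nhds (lam / μ)) := by
  have hμ : 0 < μ := hlam.trans hlamμ
  exact tendsto_of_hasDerivAt_of_sub_mul_le (lt_min hμ hθ) hq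
    (fun t _ => sub_mul_fluidDrift_le hμ hlamμ.le (q t))

/-- In the QD regime (`λ < μ`), the fluid limit converges to `λ/μ`. -/
theorem stmt_3 (lam μ θ : ℝ) (hlam : 0 < lam) (hlamμ : lam < μ) (hθ : 0 < θ)
    (q : ℝ → ℝ) (hq0 : 0 ≤ q 0)
    (hq : ∀ t : ℝ, 0 ≤ t →
      HasDerivAt q (lam - θ * max (q t - 1) 0 - μ * min (q t) 1) t) :
    Tendsto q atTop (nhds (lam / μ)) :=
  stmt_3_general lam μ θ hlam hlamμ hθ q hq
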